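/- arXiv:2508.16923 — 2 statements merged into one kernel-verified Lean document; each statement's English description precedes it below -/
import Mathlib

section
/- Let E be a vector lattice with the projection property and x, y ∈ E. The band B_{x≤y} := ((x−y)⁺)ᵈ is the largest band such that its band projection P satisfies P(x) ≤ P(y); that is, if B is any band whose projection P satisfies P(x) ≤ P(y), then B ⊆ B_{x≤y}. -/
/-!
Write `x - y = (P x - P y) + d` with `d = (x - P x) - (y - P y) ∈ Bᵈ`. Since `P x - P y ≤ 0`,
we get `(x - y)⁺ ≤ |d|`, so `(x - y)⁺` is disjoint from `B`. Hence `B ⊆ {(x - y)⁺}ᵈ`, and a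
triple disjoint complement equals the single one, so `{(x - y)⁺}ᵈ = ((x - y)⁺)ᵈ`.
-/

variable {E : Type*}

section Defs
variable [Lattice E] [AddCommGroup E] [CovariantClass E E (· + ·) (· ≤ ·)]

/-- The disjoint complement of a set. -/
def dComp (A : Set E) : Set E := {x | ∀ a ∈ A, |x| ⊓ |a| = 0}

/-- A band (in a space with the projection property) is a set equal to its double
disjoint complement. -/
def IsBand (B : Set E) : Prop := dComp (dComp B) = B

/-- The band generated by an element. -/
def bandGen (u : E) : Set E := dComp (dComp ({u} : Set E))

/-- `P` is the band projection onto `B`: every `x` decomposes as `P x ∈ B` plus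
`x - P x ∈ Bᵈ`. -/
def IsBandProjection (B : Set E) (P : E → E) : Prop :=
  (∀ x, P x ∈ B) ∧ (∀ x, x - P x ∈ dComp B)

/-- `u` is a weak order unit of the band `B`. -/
def IsWeakUnitOf (B : Set E) (u : E) : Prop :=
  u ∈ B ∧ 0 ≤ u ∧ ∀ z ∈ B, u ⊓ |z| = 0 → z = 0

/-- `u` is a weak order unit of `E`. -/
def IsWeakUnit (u : E) : Prop := 0 ≤ u ∧ ∀ z : E, u ⊓ |z| = 0 → z = 0

end Defs

section DisjointComplement
variable [Lattice E] [AddCommGroup E]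

lemma subset_dComp_comm {A C : Set E} : A ⊆ dComp C ↔ C ⊆ dComp A := by
  constructor <;> intro h c hc a ha <;> rw [inf_comm] <;> exact h ha c hc

lemma subset_dComp_dComp (A : Set E) : A ⊆ dComp (dComp A) :=
  subset_dComp_comm.mp subset_rfl

lemma dComp_antitone : Antitone (dComp : Set E → Set E) :=
  fun _ _ hAC _ hx a ha ↦ hx a (hAC ha)

lemma dComp_dComp_dComp (A : Set E) : dComp (dComp (dComp A)) = dComp A :=
  (dComp_antitone (subset_dComp_dComp A)).antisymm (subset_dComp_dComp _)

lemma dComp_bandGen (u : E) : dComp (bandGen u) = dComp {u} :=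
  dComp_dComp_dComp _

end DisjointComplement

section Disjointness
variable [Lattice E] [AddCommGroup E] [CovariantClass E E (· + ·) (· ≤ ·)]

lemma add_inf_le_inf_add_inf {a b w : E} (ha : 0 ≤ a) (hb : 0 ≤ b) (hw : 0 ≤ w) :
    (a + b) ⊓ w ≤ a ⊓ w + b ⊓ w := by
  rw [add_inf, inf_add, inf_add]
  refine le_inf (le_inf inf_le_left ?_) (le_inf ?_ ?_)
  · exact inf_le_right.trans (le_add_of_nonneg_right hb)
  · exact inf_le_right.trans (le_add_of_nonneg_left ha)
  · exact inf_le_right.trans (le_add_of_nonneg_left hw)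

lemma mem_dComp_of_abs_le {A : Set E} {z w : E} (hz : z ∈ dComp A) (hwz : |w| ≤ |z|) :
    w ∈ dComp A := fun a ha ↦
  le_antisymm (hz a ha ▸ inf_le_inf_right _ hwz) (le_inf (abs_nonneg _) (abs_nonneg _))

lemma sub_mem_dComp {A : Set E} {z₁ z₂ : E} (h₁ : z₁ ∈ dComp A) (h₂ : z₂ ∈ dComp A) :
    z₁ - z₂ ∈ dComp A := by
  intro a ha
  have habs : |z₁ - z₂| ≤ |z₁| + |z₂| := by
    simpa only [sub_eq_add_neg, abs_neg] using abs_add_le z₁ (-z₂)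
  refine le_antisymm ?_ (le_inf (abs_nonneg _) (abs_nonneg _))
  calc |z₁ - z₂| ⊓ |a| ≤ (|z₁| + |z₂|) ⊓ |a| := inf_le_inf_right _ habs
    _ ≤ |z₁| ⊓ |a| + |z₂| ⊓ |a| :=
      add_inf_le_inf_add_inf (abs_nonneg _) (abs_nonneg _) (abs_nonneg _)
    _ = 0 := by rw [h₁ a ha, h₂ a ha, add_zero]

lemma sub_sup_zero_le_abs_sub_sub {x y p q : E} (hpq : p ≤ q) :
    (x - y) ⊔ 0 ≤ |(x - p) - (y - q)| := by
  refine sup_le ?_ (abs_nonneg _)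
  calc x - y = (p - q) + ((x - p) - (y - q)) := by abel
    _ ≤ (x - p) - (y - q) := add_le_of_nonpos_left (sub_nonpos.mpr hpq)
    _ ≤ |(x - p) - (y - q)| := le_abs_self _

end Disjointness

theorem stmt2_general [Lattice E] [AddCommGroup E] [CovariantClass E E (· + ·) (· ≤ ·)]
    (x y : E) (B : Set E) (P : E → E)
    (hP : IsBandProjection B P) (h : P x ≤ P y) :
    B ⊆ dComp (bandGen ((x - y) ⊔ 0)) := by
  rw [dComp_bandGen, subset_dComp_comm, Set.singleton_subset_iff]
  have hd : (x - P x) - (y - P y) ∈ dComp B := sub_mem_dComp (hP.2 x) (hP.2 y)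
  refine mem_dComp_of_abs_le hd ?_
  rw [abs_of_nonneg le_sup_right]
  exact sub_sup_zero_le_abs_sub_sub h

/-- `B_{x≤y}` is the largest band whose projection `P` satisfies
`P x ≤ P y`. -/
theorem stmt2 [Lattice E] [AddCommGroup E] [CovariantClass E E (· + ·) (· ≤ ·)]
    [Module ℝ E] [PosSMulMono ℝ E]
    (hpp : ∀ B : Set E, IsBand B → ∃ P : E → E, IsBandProjection B P)
    (x y : E) (B : Set E) (P : E → E)
    (hB : IsBand B) (hP : IsBandProjection B P) (h : P x ≤ P y) :
    B ⊆ dComp (bandGen ((x - y) ⊔ 0)) :=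
  stmt2_general x y B P hP h
end

section
/- Let E be a Dedekind complete Φ-algebra, let a ≤ c ≤ d ≤ b in E, and let f : [a,b] → E be locally band preserving. If f(y) ≤ M for all y ∈ [c,d], then for every x ∈ [a,b], P(f(x)) ≤ P(M) where P := P_{c≤x} P_{x≤d} is the composition of the band projections onto ((c−x)⁺)ᵈ and ((x−d)⁺)ᵈ. -/
variable {E : Type*}

/-! Put `y := (x ⊔ c) ⊓ d ∈ [c, d]`, `u := (c - x)⁺` and `v := (x - d)⁺`. Then `|x - y| ≤ u + v`, so
by local band preservation `f x - f y` is disjoint from everything disjoint from both `u` and `v`.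
Hence the component of `f x - f y` in `{v}ᵈ`, the range of `P_{x≤d}`, lies in the band generated
by `u`, which `P_{c≤x}` kills. So `P_{c≤x} P_{x≤d}` takes the same value at `f x` and `f y`, and it
is monotone, being a band projection. -/

section DisjointComplement
variable [Lattice E] [AddCommGroup E]

lemma mem_bandGen_self (u : E) : u ∈ bandGen u :=
  fun e he ↦ inf_comm |e| |u| ▸ he u rfl

variable [CovariantClass E E (· + ·) (· ≤ ·)]

lemma inf_add_le_add_inf {z p q : E} (hz : 0 ≤ z) (hp : 0 ≤ p) (hq : 0 ≤ q) :
    z ⊓ (p + q) ≤ z ⊓ p + z ⊓ q := by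
  rw [inf_add, add_inf, add_inf]
  refine le_inf (le_inf ?_ ?_) (le_inf ?_ ?_)
  · exact inf_le_left.trans (le_add_of_nonneg_left hz)
  · exact inf_le_left.trans (le_add_of_nonneg_right hq)
  · exact inf_le_left.trans (le_add_of_nonneg_left hp)
  · exact inf_le_right

lemma abs_inf_abs_eq_zero_of_abs_le {a b c : E} (h : |a| ⊓ |c| = 0) (hba : |b| ≤ |a|) :
    |b| ⊓ |c| = 0 :=
  le_antisymm ((inf_le_inf_right _ hba).trans h.le) (le_inf (abs_nonneg b) (abs_nonneg c))

lemma abs_add_inf_abs_eq_zero {a b c : E} (ha : |a| ⊓ |c| = 0) (hb : |b| ⊓ |c| = 0) :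
    |a + b| ⊓ |c| = 0 := by
  refine le_antisymm ?_ (le_inf (abs_nonneg _) (abs_nonneg c))
  calc |a + b| ⊓ |c| ≤ |c| ⊓ (|a| + |b|) := by
        rw [inf_comm]; exact inf_le_inf_left _ (abs_add_le a b)
    _ ≤ |c| ⊓ |a| + |c| ⊓ |b| :=
        inf_add_le_add_inf (abs_nonneg c) (abs_nonneg a) (abs_nonneg b)
    _ = 0 := by rw [inf_comm, ha, inf_comm, hb, add_zero]

lemma abs_sub_inf_abs_eq_zero {a b c : E} (ha : |a| ⊓ |c| = 0) (hb : |b| ⊓ |c| = 0) :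
    |a - b| ⊓ |c| = 0 := by
  rw [sub_eq_add_neg]
  exact abs_add_inf_abs_eq_zero ha (by rwa [abs_neg])

lemma eq_zero_of_abs_inf_abs_self {a : E} (h : |a| ⊓ |a| = 0) : a = 0 := by
  rw [inf_idem] at h
  exact le_antisymm ((le_abs_self a).trans h.le) (neg_nonpos.mp ((neg_le_abs a).trans h.le))

lemma nonneg_of_add_nonneg_of_abs_inf_abs_eq_zero {s r : E} (hsr : |s| ⊓ |r| = 0)
    (h : 0 ≤ s + r) : 0 ≤ s := by
  have hneg : -s ≤ r := neg_le_iff_add_nonneg.mpr (by rwa [add_comm])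
  exact neg_nonpos.mp (hsr ▸ le_inf (neg_le_abs s) (hneg.trans (le_abs_self r)))

lemma sub_mem_dComp_s15 {A : Set E} {z w : E} (hz : z ∈ dComp A) (hw : w ∈ dComp A) :
    z - w ∈ dComp A :=
  fun e he ↦ abs_sub_inf_abs_eq_zero (hz e he) (hw e he)

lemma eq_zero_of_mem_of_mem_dComp {A : Set E} {z : E} (hA : z ∈ A) (hdA : z ∈ dComp A) : z = 0 :=
  eq_zero_of_abs_inf_abs_self (hdA z hA)

lemma abs_sub_sup_inf_le (x c d : E) : |x - (x ⊔ c) ⊓ d| ≤ (c - x) ⊔ 0 + (x - d) ⊔ 0 := by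
  have hu : (0 : E) ≤ (c - x) ⊔ 0 := le_sup_right
  have hv : (0 : E) ≤ (x - d) ⊔ 0 := le_sup_right
  refine abs_le'.mpr ⟨?_, ?_⟩
  · calc x - (x ⊔ c) ⊓ d = (x - (x ⊔ c)) ⊔ (x - d) := sub_inf _ _ _
      _ ≤ (x - d) ⊔ 0 := sup_le ((sub_nonpos.mpr le_sup_left).trans le_sup_right) le_sup_left
      _ ≤ _ := le_add_of_nonneg_left hu
  · calc -(x - (x ⊔ c) ⊓ d) = (x ⊔ c) ⊓ d - x := neg_sub _ _
      _ ≤ (x ⊔ c) - x := sub_le_sub_right inf_le_left x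
      _ = (c - x) ⊔ 0 := by rw [sup_sub, sub_self, sup_comm]
      _ ≤ _ := le_add_of_nonneg_right hv

end DisjointComplement

namespace IsBandProjection
variable [Lattice E] [AddCommGroup E] [CovariantClass E E (· + ·) (· ≤ ·)]
  {A : Set E} {P : E → E}

lemma sub_mem (hP : IsBandProjection (dComp A) P) (p q : E) :
    P p - P q ∈ dComp A ∧ (p - q) - (P p - P q) ∈ dComp (dComp A) := by
  refine ⟨sub_mem_dComp_s15 (hP.1 p) (hP.1 q), ?_⟩
  rw [show (p - q) - (P p - P q) = (p - P p) - (q - P q) by abel]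
  exact sub_mem_dComp_s15 (hP.2 p) (hP.2 q)

lemma monotone (hP : IsBandProjection (dComp A) P) : Monotone P := by
  intro w₁ w₂ hw
  obtain ⟨hs, hr⟩ := hP.sub_mem w₂ w₁
  have hsum : 0 ≤ (P w₂ - P w₁) + ((w₂ - w₁) - (P w₂ - P w₁)) := by
    rw [add_sub_cancel]
    exact sub_nonneg.mpr hw
  exact sub_nonneg.mp
    (nonneg_of_add_nonneg_of_abs_inf_abs_eq_zero ((inf_comm _ _).trans (hr _ hs)) hsum)

lemma apply_eq_of_sub_mem (hP : IsBandProjection (dComp A) P) {p q : E}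
    (hpq : p - q ∈ dComp (dComp A)) : P p = P q := by
  obtain ⟨hs, hr⟩ := hP.sub_mem p q
  have hs' : P p - P q ∈ dComp (dComp A) := by
    simpa using sub_mem_dComp_s15 hpq hr
  exact sub_eq_zero.mp (eq_zero_of_mem_of_mem_dComp hs hs')

lemma sub_mem_dComp_dComp_bandGen {u v : E} (hP : IsBandProjection (dComp (bandGen v)) P)
    {p q : E} (hpq : ∀ t : E, |t| ⊓ |u| = 0 → |t| ⊓ |v| = 0 → |p - q| ⊓ |t| = 0) :
    P p - P q ∈ dComp (dComp (bandGen u)) := by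
  obtain ⟨hs, hr⟩ := hP.sub_mem p q
  intro z hz
  set s := P p - P q
  set t := |s| ⊓ |z|
  have ht : |t| = t := abs_of_nonneg (le_inf (abs_nonneg s) (abs_nonneg z))
  have htz : |t| ≤ |z| := ht.le.trans inf_le_right
  have hts : |t| ≤ |s| := ht.le.trans inf_le_left
  have htu : |t| ⊓ |u| = 0 :=
    abs_inf_abs_eq_zero_of_abs_le (hz u (mem_bandGen_self u)) htz
  have htv : |t| ⊓ |v| = 0 :=
    abs_inf_abs_eq_zero_of_abs_le (hs v (mem_bandGen_self v)) hts
  have hrt : |(p - q) - s| ⊓ |t| = 0 := by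
    rw [inf_comm]; exact abs_inf_abs_eq_zero_of_abs_le (inf_comm |s| _ ▸ hr s hs) hts
  have hst : |s| ⊓ |t| = 0 := by
    simpa using abs_sub_inf_abs_eq_zero (hpq t htu htv) hrt
  rwa [ht, ← inf_assoc, inf_idem] at hst

end IsBandProjection

theorem stmt15_general [ConditionallyCompleteLattice E] [CommRing E]
    [CovariantClass E E (· + ·) (· ≤ ·)]
    (a b c d M : E) (hac : a ≤ c) (hcd : c ≤ d) (hdb : d ≤ b)
    (f : E → E)
    (hlbp : ∀ x ∈ Set.Icc a b, ∀ y ∈ Set.Icc a b, ∀ z : E,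
      |x - y| ⊓ |z| = 0 → |f x - f y| ⊓ |z| = 0)
    (hM : ∀ y ∈ Set.Icc c d, f y ≤ M)
    (x : E) (hx : x ∈ Set.Icc a b)
    (P₁ P₂ : E → E)
    (h₁ : IsBandProjection (dComp (bandGen ((c - x) ⊔ 0))) P₁)
    (h₂ : IsBandProjection (dComp (bandGen ((x - d) ⊔ 0))) P₂) :
    P₁ (P₂ (f x)) ≤ P₁ (P₂ M) := by
  set u : E := (c - x) ⊔ 0
  set v : E := (x - d) ⊔ 0
  set y : E := (x ⊔ c) ⊓ d
  have hy : y ∈ Set.Icc c d := ⟨le_inf le_sup_right hcd, inf_le_right⟩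
  have hxy : |x - y| ≤ |u + v| :=
    (abs_sub_sup_inf_le x c d).trans (le_abs_self _)
  have hfxy (t : E) (htu : |t| ⊓ |u| = 0) (htv : |t| ⊓ |v| = 0) : |f x - f y| ⊓ |t| = 0 := by
    refine hlbp x hx y ⟨hac.trans hy.1, hy.2.trans hdb⟩ t (abs_inf_abs_eq_zero_of_abs_le ?_ hxy)
    exact abs_add_inf_abs_eq_zero (by rwa [inf_comm]) (by rwa [inf_comm])
  rw [h₁.apply_eq_of_sub_mem (h₂.sub_mem_dComp_dComp_bandGen hfxy)]
  exact h₁.monotone (h₂.monotone (hM y hy))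

/-- if `f` is locally band preserving on `[a,b]` and bounded above
by `M` on `[c,d]`, then `P_{c≤x} P_{x≤d} (f x) ≤ P_{c≤x} P_{x≤d} M`. -/
theorem stmt15 [ConditionallyCompleteLattice E] [CommRing E]
    [CovariantClass E E (· + ·) (· ≤ ·)]
    (hmulpos : ∀ a b : E, 0 ≤ a → 0 ≤ b → 0 ≤ a * b)
    (hfalg : ∀ a b c : E, a ⊓ b = 0 → 0 ≤ c → (c * a) ⊓ b = 0)
    (a b c d M : E) (hac : a ≤ c) (hcd : c ≤ d) (hdb : d ≤ b)
    (f : E → E)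
    (hlbp : ∀ x ∈ Set.Icc a b, ∀ y ∈ Set.Icc a b, ∀ z : E,
      |x - y| ⊓ |z| = 0 → |f x - f y| ⊓ |z| = 0)
    (hM : ∀ y ∈ Set.Icc c d, f y ≤ M)
    (x : E) (hx : x ∈ Set.Icc a b)
    (P₁ P₂ : E → E)
    (h₁ : IsBandProjection (dComp (bandGen ((c - x) ⊔ 0))) P₁)
    (h₂ : IsBandProjection (dComp (bandGen ((x - d) ⊔ 0))) P₂) :
    P₁ (P₂ (f x)) ≤ P₁ (P₂ M) :=
  stmt15_general a b c d M hac hcd hdb f hlbp hM x hx P₁ P₂ h₁ h₂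
end
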